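/- arXiv:2412.10992 — 4 statements merged into one kernel-verified Lean document; each statement's English description precedes it below -/
import Mathlib

section
/- Let ν be a finite positive Borel measure on ℝ, F(z) = ∫ (1+tz)/(t-z) dν(t), and let t₀ ∈ ℝ. Then lim_{y→0+} (-i y)·F(t₀ + iy) = (1 + t₀²)·ν({t₀}). -/
/-!
Write `z = t₀ + iy`. Since `1 + tz = (1 + z²) + z (t - z)`, one has
`-iy F(z) = (1 + z²) ∫ -iy / (t - z) dν(t) - iy z ν(ℝ)`.
The kernel `-iy / (t - z)` has modulus at most `1`, equals `1` at `t = t₀` and tends to `0`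
at every other `t`, so by dominated convergence its integral tends to `ν({t₀})`.
-/

open MeasureTheory Filter Topology Complex

lemma norm_neg_I_mul_div_sub_le_one (t₀ y t : ℝ) :
    ‖-I * y / (t - (t₀ + y * I))‖ ≤ 1 := by
  rw [norm_div]
  refine div_le_one_of_le₀ ?_ (norm_nonneg _)
  calc ‖-I * (y : ℂ)‖ = |((t : ℂ) - (t₀ + y * I)).im| := by simp
    _ ≤ _ := abs_im_le_norm _

lemma tendsto_neg_I_mul_div_sub (t₀ t : ℝ) :
    Tendsto (fun y : ℝ => -I * y / (t - (t₀ + y * I))) (𝓝[≠] 0)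
      (𝓝 (({t₀} : Set ℝ).indicator (fun _ => 1) t)) := by
  by_cases ht : t = t₀
  · subst ht
    rw [Set.indicator_of_mem (Set.mem_singleton t)]
    refine tendsto_const_nhds.congr' ?_
    filter_upwards [self_mem_nhdsWithin] with y hy
    have hy : (y : ℂ) ≠ 0 := by exact_mod_cast hy
    field_simp
    ring
  · rw [Set.indicator_of_notMem (Set.notMem_singleton_iff.mpr ht)]
    have hden : (t : ℂ) - (t₀ + (0 : ℝ) * I) ≠ 0 := by
      simpa [sub_eq_zero] using ht
    have hcont : ContinuousAt (fun y : ℝ => -I * y / (t - (t₀ + y * I))) 0 :=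
      ContinuousAt.div (by fun_prop) (by fun_prop) hden
    simpa using hcont.tendsto.mono_left nhdsWithin_le_nhds

lemma integrable_neg_I_mul_div_sub (μ : Measure ℝ) [IsFiniteMeasure μ] (t₀ y : ℝ) :
    Integrable (fun t : ℝ => -I * y / (t - (t₀ + y * I))) μ :=
  .of_bound (by fun_prop : Measurable _).aestronglyMeasurable 1
    (ae_of_all _ (norm_neg_I_mul_div_sub_le_one t₀ y))

theorem tendsto_integral_neg_I_mul_div_sub (μ : Measure ℝ) [IsFiniteMeasure μ] (t₀ : ℝ) :
    Tendsto (fun y : ℝ => ∫ t, -I * y / (t - (t₀ + y * I)) ∂μ) (𝓝[≠] 0)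
      (𝓝 (μ.real {t₀} : ℂ)) := by
  have h := tendsto_integral_filter_of_dominated_convergence (fun _ => (1 : ℝ))
    (.of_forall fun y => (integrable_neg_I_mul_div_sub μ t₀ y).aestronglyMeasurable)
    (.of_forall fun y => ae_of_all _ (norm_neg_I_mul_div_sub_le_one t₀ y))
    (integrable_const 1) (ae_of_all _ (tendsto_neg_I_mul_div_sub t₀))
  convert h using 2
  rw [integral_indicator_const _ (measurableSet_singleton t₀)]
  simp

lemma mul_one_add_mul_div_sub {w z : ℂ} (c : ℂ) (h : w ≠ z) :
    c * ((1 + w * z) / (w - z)) = (1 + z ^ 2) * (c / (w - z)) + c * z := by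
  have h : w - z ≠ 0 := sub_ne_zero.mpr h
  field_simp
  ring

lemma neg_I_mul_integral_one_add_mul_div_sub (μ : Measure ℝ) [IsFiniteMeasure μ] (t₀ : ℝ)
    {y : ℝ} (hy : y ≠ 0) :
    -I * y * ∫ t : ℝ, (1 + t * (t₀ + y * I)) / (t - (t₀ + y * I)) ∂μ
      = (1 + (t₀ + y * I) ^ 2) * (∫ t : ℝ, -I * y / (t - (t₀ + y * I)) ∂μ)
        + μ.real Set.univ • (-I * y * (t₀ + y * I)) := by
  have hne (t : ℝ) : (t : ℂ) ≠ t₀ + y * I := fun h => hy (by simpa using (congrArg im h).symm)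
  simp_rw [← integral_const_mul, mul_one_add_mul_div_sub _ (hne _)]
  rw [integral_add ((integrable_neg_I_mul_div_sub μ t₀ y).const_mul _) (integrable_const _),
    integral_const_mul, integral_const]

/-- Point masses from boundary asymptotics: for a finite Borel measure `ν` on `ℝ`,
`F(z) = ∫ (1+tz)/(t-z) dν(t)`, and `t₀ ∈ ℝ`, one has
`lim_{y→0+} (-iy)·F(t₀+iy) = (1+t₀²)·ν({t₀})`. -/
theorem stmt7 (ν : Measure ℝ) [IsFiniteMeasure ν] (t₀ : ℝ) :
    Filter.Tendsto
      (fun y : ℝ => (-Complex.I * (y : ℂ)) *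
        ∫ t : ℝ, (1 + (t : ℂ) * ((t₀ : ℂ) + (y : ℂ) * Complex.I)) /
          ((t : ℂ) - ((t₀ : ℂ) + (y : ℂ) * Complex.I)) ∂ν)
      (nhdsWithin 0 (Set.Ioi 0))
      (nhds (((1 + t₀ ^ 2) * (ν {t₀}).toReal : ℝ) : ℂ)) := by
  have hpos : 𝓝[>] (0 : ℝ) ≤ 𝓝[≠] 0 := nhdsWithin_mono 0 fun y (hy : y ∈ Set.Ioi 0) => hy.ne'
  refine Tendsto.congr' ((eventually_mem_nhdsWithin.filter_mono hpos).mono fun y hy =>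
    (neg_I_mul_integral_one_add_mul_div_sub ν t₀ hy).symm) ?_
  have hcoef : Tendsto (fun y : ℝ => 1 + ((t₀ : ℂ) + y * I) ^ 2) (𝓝[>] 0) (𝓝 (1 + (t₀ : ℂ) ^ 2)) :=
    ((by fun_prop : Continuous fun y : ℝ => 1 + ((t₀ : ℂ) + y * I) ^ 2).tendsto' 0 _
      (by simp)).mono_left nhdsWithin_le_nhds
  have hrest : Tendsto (fun y : ℝ => ν.real Set.univ • (-I * y * (t₀ + y * I))) (𝓝[>] 0) (𝓝 0) :=
    ((by fun_prop : Continuous fun y : ℝ => ν.real Set.univ • (-I * y * (t₀ + y * I))).tendsto'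
      0 _ (by simp)).mono_left nhdsWithin_le_nhds
  have hkernel := (tendsto_integral_neg_I_mul_div_sub ν t₀).mono_left hpos
  convert (hcoef.mul hkernel).add hrest using 2
  simp [measureReal_def]
end

section
/- Let μ and ν be finite positive Borel measures on ℝ with Herglotz functions F_μ(z) = ∫ (1+tz)/(t-z) dμ(t) and F_ν. If F_μ = F_ν on ℂ⁺, then μ = ν. -/
/-!
At `z = i` the Herglotz kernel `(1 + t z) / (t - z)` is constantly `i`, so `F_μ(i) = i μ(ℝ)` and
the total masses agree. The decomposition `(1 + t z) / (t - z) = z + (1 + z²) / (t - z)` then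
shows that the Cauchy transforms `∫ dμ(t) / (t - z)` agree for `z ≠ i`. At `z = x + iγ` the
imaginary part of the Cauchy transform is `π` times the density at `x` of `μ` convolved with the
Cauchy distribution of scale `γ`; by Fubini, integrating a bounded continuous `f` against these
convolutions gives the same value for `μ` and `ν`, and letting `γ → 0` yields
`∫ f dμ = ∫ f dν`.
-/

open MeasureTheory ProbabilityTheory Filter Topology BoundedContinuousFunction Complex
open scoped NNReal

namespace ProbabilityTheory

lemma cauchyPDFReal_comm (x₀ : ℝ) (γ : ℝ≥0) (x : ℝ) :
    cauchyPDFReal x₀ γ x = cauchyPDFReal x γ x₀ := by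
  simp only [cauchyPDFReal_def, ← neg_sub x₀ x, neg_sq]

lemma integral_cauchyMeasure_eq_integral_cauchyPDFReal_mul (f : ℝ → ℝ) (x₀ : ℝ) {γ : ℝ≥0}
    (hγ : γ ≠ 0) : ∫ x, f x ∂cauchyMeasure x₀ γ = ∫ x, cauchyPDFReal x₀ γ x * f x := by
  rw [cauchyMeasure_of_scale_ne_zero _ hγ,
    integral_withDensity_eq_integral_toReal_smul (measurable_cauchyPDF _ _)
      (ae_of_all _ fun _ => ENNReal.ofReal_lt_top)]
  simp [cauchyPDF, ENNReal.toReal_ofReal (cauchyPDF_pos x₀ hγ _).le]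

/-- Valid also at `γ = 0`, where `cauchyMeasure x₀ 0` is a Dirac mass; this is what makes the
integral visibly continuous in `γ` down to `0`. -/
lemma integral_cauchyMeasure_eq (f : ℝ → ℝ) (x₀ : ℝ) (γ : ℝ≥0) :
    ∫ x, f x ∂cauchyMeasure x₀ γ = Real.pi⁻¹ * ∫ u, (1 + u ^ 2)⁻¹ * f (x₀ + γ * u) := by
  rcases eq_or_ne γ 0 with rfl | hγ
  · simp [integral_mul_const, integral_univ_inv_one_add_sq]
  have hγ' : (γ : ℝ) ≠ 0 := by exact_mod_cast hγ
  set g : ℝ → ℝ := fun y => (1 + (y / γ) ^ 2)⁻¹ * f (x₀ + y)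
  have hg : ∀ u, g (γ * u) = (1 + u ^ 2)⁻¹ * f (x₀ + γ * u) := fun u => by
    simp only [g, mul_div_cancel_left₀ _ hγ']
  simp_rw [integral_cauchyMeasure_eq_integral_cauchyPDFReal_mul f x₀ hγ, ← hg,
    Measure.integral_comp_mul_left g, ← integral_sub_right_eq_self g x₀, cauchyPDFReal_def',
    g, smul_eq_mul, ← integral_const_mul]
  congr 1 with x
  rw [abs_inv, NNReal.abs_eq, add_sub_cancel, NNReal.coe_inv]
  ring

lemma continuous_integral_cauchyMeasure (f : ℝ →ᵇ ℝ) :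
    Continuous fun p : ℝ × ℝ≥0 => ∫ x, f x ∂cauchyMeasure p.1 p.2 := by
  simp_rw [integral_cauchyMeasure_eq]
  refine continuous_const.mul <| continuous_of_dominated (bound := fun u => (1 + u ^ 2)⁻¹ * ‖f‖)
    (fun _ => by fun_prop) (fun _ => ae_of_all _ fun u => ?_)
    (integrable_inv_one_add_sq.mul_const _) (ae_of_all _ fun _ => by fun_prop)
  rw [norm_mul, Real.norm_of_nonneg (by positivity)]
  exact mul_le_mul_of_nonneg_left (f.norm_coe_le_norm _) (by positivity)

lemma continuous_integral_integral_cauchyMeasure (f : ℝ →ᵇ ℝ) (μ : Measure ℝ)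
    [IsFiniteMeasure μ] :
    Continuous fun γ : ℝ≥0 => ∫ t, ∫ x, f x ∂cauchyMeasure t γ ∂μ :=
  continuous_of_dominated (bound := fun _ => ‖f‖)
    (fun _ => ((continuous_integral_cauchyMeasure f).comp
      (continuous_id.prodMk continuous_const)).aestronglyMeasurable)
    (fun _ => ae_of_all _ fun _ => f.norm_integral_le_norm _) (integrable_const _)
    (ae_of_all _ fun _ => (continuous_integral_cauchyMeasure f).comp
      (continuous_const.prodMk continuous_id))

lemma integrable_cauchyPDFReal_prod (μ : Measure ℝ) [IsFiniteMeasure μ] {γ : ℝ≥0} (hγ : γ ≠ 0) :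
    Integrable (Function.uncurry fun t x => cauchyPDFReal t γ x) (μ.prod volume) := by
  refine (integrable_prod_iff ?_).2 ⟨ae_of_all _ fun t => integrable_cauchyPDFReal t, ?_⟩
  · simp_rw [Function.uncurry_def, cauchyPDFReal_def]
    fun_prop
  · simp_rw [Function.uncurry_apply_pair, Real.norm_of_nonneg (cauchyPDF_pos _ hγ _).le,
      integral_cauchyPDFReal_eq_one _ hγ]
    exact integrable_const _

lemma integral_integral_cauchyMeasure (f : ℝ →ᵇ ℝ) (μ : Measure ℝ) [IsFiniteMeasure μ]
    {γ : ℝ≥0} (hγ : γ ≠ 0) :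
    ∫ t, ∫ x, f x ∂cauchyMeasure t γ ∂μ = ∫ x, f x * ∫ t, cauchyPDFReal x γ t ∂μ := by
  have hint : Integrable (Function.uncurry fun t x => cauchyPDFReal t γ x * f x)
      (μ.prod volume) :=
    (integrable_cauchyPDFReal_prod μ hγ).mul_bdd
      (f.continuous.comp continuous_snd).aestronglyMeasurable
      (ae_of_all _ fun p => f.norm_coe_le_norm p.2)
  simp_rw [integral_cauchyMeasure_eq_integral_cauchyPDFReal_mul _ _ hγ,
    integral_integral_swap hint, integral_mul_const, cauchyPDFReal_comm _ γ, mul_comm (f _)]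

end ProbabilityTheory

theorem MeasureTheory.ext_of_eventually_integral_cauchyPDFReal_eq {μ ν : Measure ℝ}
    [IsFiniteMeasure μ] [IsFiniteMeasure ν]
    (h : ∀ᶠ γ in 𝓝[>] (0 : ℝ≥0), ∀ x,
      ∫ t, cauchyPDFReal x γ t ∂μ = ∫ t, cauchyPDFReal x γ t ∂ν) :
    μ = ν := by
  refine ext_of_forall_integral_eq_of_IsFiniteMeasure fun f => ?_
  have hlim : ∀ (ρ : Measure ℝ) [IsFiniteMeasure ρ],
      Tendsto (fun γ => ∫ t, ∫ x, f x ∂cauchyMeasure t γ ∂ρ) (𝓝[>] 0) (𝓝 (∫ t, f t ∂ρ)) :=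
    fun ρ _ => by
      simpa using ((continuous_integral_integral_cauchyMeasure f ρ).tendsto 0).mono_left
        nhdsWithin_le_nhds
  refine tendsto_nhds_unique ((hlim μ).congr' ?_) (hlim ν)
  filter_upwards [h, self_mem_nhdsWithin] with γ hγ hγ0
  simp_rw [integral_integral_cauchyMeasure f _ (ne_of_gt hγ0), hγ]

namespace MeasureTheory.Measure

noncomputable def cauchyTransform (μ : Measure ℝ) (z : ℂ) : ℂ :=
  ∫ t, ((t : ℂ) - z)⁻¹ ∂μ

noncomputable def herglotzFunction (μ : Measure ℝ) (z : ℂ) : ℂ :=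
  ∫ t : ℝ, (1 + (t : ℂ) * z) / ((t : ℂ) - z) ∂μ

lemma ofReal_sub_ne_zero_of_im_pos {z : ℂ} (hz : 0 < z.im) (t : ℝ) : (t : ℂ) - z ≠ 0 :=
  fun h => hz.ne' (by simpa using congrArg im h)

lemma norm_inv_ofReal_sub_le {z : ℂ} (hz : 0 < z.im) (t : ℝ) :
    ‖((t : ℂ) - z)⁻¹‖ ≤ z.im⁻¹ := by
  rw [norm_inv]
  exact inv_anti₀ hz ((le_abs_self _).trans (by simpa using abs_im_le_norm ((t : ℂ) - z)))

lemma integrable_inv_ofReal_sub (μ : Measure ℝ) [IsFiniteMeasure μ] {z : ℂ} (hz : 0 < z.im) :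
    Integrable (fun t : ℝ => ((t : ℂ) - z)⁻¹) μ :=
  (integrable_const z.im⁻¹).mono'
    ((continuous_ofReal.sub continuous_const).inv₀
      (ofReal_sub_ne_zero_of_im_pos hz)).aestronglyMeasurable
    (ae_of_all _ (norm_inv_ofReal_sub_le hz))

lemma herglotzFunction_eq (μ : Measure ℝ) [IsFiniteMeasure μ] {z : ℂ} (hz : 0 < z.im) :
    μ.herglotzFunction z = μ.real Set.univ * z + (1 + z ^ 2) * μ.cauchyTransform z := by
  have hsplit : ∀ t : ℝ,
      (1 + (t : ℂ) * z) / ((t : ℂ) - z) = z + (1 + z ^ 2) * ((t : ℂ) - z)⁻¹ :=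
    fun t => by field_simp [ofReal_sub_ne_zero_of_im_pos hz t]; ring
  simp_rw [herglotzFunction, hsplit]
  rw [integral_add (integrable_const z) ((integrable_inv_ofReal_sub μ hz).const_mul _),
    integral_const, integral_const_mul, real_smul, cauchyTransform]

lemma im_inv_ofReal_sub (x t : ℝ) (γ : ℝ≥0) :
    (((t : ℂ) - (x + γ * I))⁻¹).im = Real.pi * cauchyPDFReal x γ t := by
  simp only [inv_im, normSq_apply, cauchyPDFReal_def, sub_re, sub_im, add_re, add_im, ofReal_re,
    ofReal_im, mul_re, mul_im, I_re, I_im]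
  field_simp
  ring

lemma im_cauchyTransform (μ : Measure ℝ) [IsFiniteMeasure μ] (x : ℝ) {γ : ℝ≥0} (hγ : γ ≠ 0) :
    (μ.cauchyTransform (x + γ * I)).im = Real.pi * ∫ t, cauchyPDFReal x γ t ∂μ := by
  have hz : 0 < (x + γ * I : ℂ).im := by simpa using pos_of_ne_zero hγ
  rw [cauchyTransform, ← integral_const_mul, ← RCLike.im_eq_complex_im,
    ← integral_im (integrable_inv_ofReal_sub μ hz)]
  simp_rw [RCLike.im_eq_complex_im, im_inv_ofReal_sub]

variable {μ ν : Measure ℝ} [IsFiniteMeasure μ] [IsFiniteMeasure ν]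

lemma measureReal_univ_eq_of_herglotzFunction_I_eq
    (h : μ.herglotzFunction I = ν.herglotzFunction I) : μ.real Set.univ = ν.real Set.univ := by
  simpa [herglotzFunction_eq _ (z := I) (by simp)] using h

lemma cauchyTransform_eq_of_herglotzFunction_eq
    (h : ∀ z : ℂ, 0 < z.im → μ.herglotzFunction z = ν.herglotzFunction z)
    {z : ℂ} (hz : 0 < z.im) (hzI : z ≠ I) : μ.cauchyTransform z = ν.cauchyTransform z := by
  have hmass := measureReal_univ_eq_of_herglotzFunction_I_eq (h I (by simp))
  have hfactor : 1 + z ^ 2 ≠ 0 := by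
    rw [show 1 + z ^ 2 = (z - I) * (z + I) by ring_nf; rw [I_sq]; ring]
    refine mul_ne_zero (sub_ne_zero.2 hzI) fun hzI' => ?_
    have := congrArg im hzI'
    simp only [add_im, I_im, zero_im] at this
    linarith
  have := h z hz
  rwa [herglotzFunction_eq μ hz, herglotzFunction_eq ν hz, hmass, _root_.add_right_inj,
    mul_right_inj' hfactor] at this

end MeasureTheory.Measure

/-- Uniqueness in the Herglotz representation: if two finite positive Borel measures on `ℝ`
have the same Herglotz function `F(z) = ∫ (1+tz)/(t-z) dν(t)` on the upper half plane,
then they are equal. -/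
theorem stmt8 (μ ν : Measure ℝ) [IsFiniteMeasure μ] [IsFiniteMeasure ν]
    (h : ∀ z : ℂ, 0 < z.im →
      ∫ t : ℝ, (1 + (t : ℂ) * z) / ((t : ℂ) - z) ∂μ
        = ∫ t : ℝ, (1 + (t : ℂ) * z) / ((t : ℂ) - z) ∂ν) :
    μ = ν := by
  refine ext_of_eventually_integral_cauchyPDFReal_eq ?_
  filter_upwards [Ioo_mem_nhdsGT (zero_lt_one' ℝ≥0)] with γ ⟨hγ0, hγ1⟩ x
  have hz : 0 < (x + γ * I : ℂ).im := by simpa using hγ0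
  have hzI : (x + γ * I : ℂ) ≠ I := fun hI => hγ1.ne (by simpa using congrArg im hI)
  have := congrArg im (Measure.cauchyTransform_eq_of_herglotzFunction_eq h hz hzI)
  rwa [Measure.im_cauchyTransform μ x hγ0.ne', Measure.im_cauchyTransform ν x hγ0.ne',
    mul_right_inj' Real.pi_ne_zero] at this
end

section
/- Let G be a countable group acting measurably on a measurable space X, let f : G × X → ℝ_{>0} be a cocycle (f(gh;x) = f(g;h·x)f(h;x)), let F ⊆ X be a set meeting each G-orbit of its saturation G·F exactly once, and let ν₀ be a measure on F. Define ν on G·F by ν(g·A) = ∫_A f(g;x) dν₀(x) for A ⊆ F and g ∈ G. Then ν satisfies the automorphy relation: for every g, h ∈ G and measurable A ⊆ F, ∫_{g⁻¹h·A} f(g;x) dν(x) = ν(h·A). -/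
open MeasureTheory Pointwise

/-- Propagating a measure from a fundamental set by a cocycle yields an automorphic measure:
with `ν` defined on `G·F` by `ν(g·A) = ∫_A f(g;x) dν₀(x)` for `A ⊆ F`, one has
`∫_{g⁻¹h·A} f(g;x) dν(x) = ν(h·A)` for all `g, h ∈ G` and measurable `A ⊆ F`. -/
theorem stmt10 {G X : Type*} [Group G] [Countable G] [MulAction G X]
    [MeasurableSpace X]
    (hsmul : ∀ g : G, Measurable fun x : X => g • x)
    (f : G → X → ℝ) (hfpos : ∀ (g : G) (x : X), 0 < f g x)
    (hfmeas : ∀ g : G, Measurable (f g))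
    (hcoc : ∀ (g h : G) (x : X), f (g * h) x = f g (h • x) * f h x)
    (F : Set X) (hF : MeasurableSet F)
    (hdisj : ∀ g h : G, g ≠ h → Disjoint (g • F) (h • F))
    (ν₀ ν : Measure X)
    (hν : ∀ (g : G) (A : Set X), MeasurableSet A → A ⊆ F →
      ν (g • A) = ∫⁻ x in A, ENNReal.ofReal (f g x) ∂ν₀)
    (g h : G) (A : Set X) (hA : MeasurableSet A) (hAF : A ⊆ F) :
    ∫⁻ x in (g⁻¹ * h) • A, ENNReal.ofReal (f g x) ∂ν = ν (h • A) := by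
  set k := g⁻¹ * h with hk
  have hgk : g * k = h := by rw [hk]; group
  have hmeasSmul : ∀ (c : G) (S : Set X), MeasurableSet S → MeasurableSet (c • S) := by
    intro c S hS
    have : MeasurableSet ((fun x => c⁻¹ • x) ⁻¹' S) := hsmul c⁻¹ hS
    rwa [Set.preimage_smul, inv_inv] at this
  have hrestrict : ν.restrict (k • A) =
      Measure.map (fun x => k • x)
        ((ν₀.withDensity fun x => ENNReal.ofReal (f k x)).restrict A) := by
    ext S hS
    rw [Measure.restrict_apply hS,
        Measure.map_apply (hsmul k) hS,
        Measure.restrict_apply (hsmul k hS),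
        withDensity_apply _ ((hsmul k hS).inter hA)]
    have key : S ∩ k • A = k • ((fun x => k • x) ⁻¹' S ∩ A) := by
      rw [Set.smul_set_inter, Set.preimage_smul, smul_inv_smul]
    rw [key, hν k _ ((hsmul k hS).inter hA) (fun x hx => hAF hx.2)]
  calc ∫⁻ x in k • A, ENNReal.ofReal (f g x) ∂ν
      = ∫⁻ x, ENNReal.ofReal (f g x)
          ∂(Measure.map (fun x => k • x)
            ((ν₀.withDensity fun x => ENNReal.ofReal (f k x)).restrict A)) := by
        rw [← hrestrict]
    _ = ∫⁻ x in A, ENNReal.ofReal (f g (k • x))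
          ∂(ν₀.withDensity fun x => ENNReal.ofReal (f k x)) := by
        rw [lintegral_map ((hfmeas g).ennreal_ofReal) (hsmul k)]
    _ = ∫⁻ x in A, ENNReal.ofReal (f k x) * ENNReal.ofReal (f g (k • x)) ∂ν₀ := by
        have hm : Measurable fun x : X => ENNReal.ofReal (f g (k • x)) :=
          ((hfmeas g).comp (hsmul k)).ennreal_ofReal
        rw [restrict_withDensity hA,
          lintegral_withDensity_eq_lintegral_mul _ ((hfmeas k).ennreal_ofReal) hm]
        rfl
    _ = ∫⁻ x in A, ENNReal.ofReal (f h x) ∂ν₀ := by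
        refine lintegral_congr fun x => ?_
        rw [← ENNReal.ofReal_mul (hfpos k x).le, mul_comm (f k x), ← hcoc, hgk]
    _ = ν (h • A) := (hν h A hA hAF).symm
end

section
/- Let G be a countable set of matrices g = [[a_g, b_g],[c_g, d_g]] in SL(2,ℝ) such that Σ_{g∈G} 1/a_g² < ∞ (all a_g ≠ 0), and there are constants 0 < C₁ ≤ C₂ with C₁ ≤ |a_g/b_g| ≤ C₂ for all g with b_g ≠ 0. Then the series Σ_{g∈G} (x²+1)/((a_g x + b_g)² + (c_g x + d_g)²) converges uniformly on the set {x ∈ ℝ : |x| ≥ max(2/C₁, 1)}. -/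
/-!
For `|x| ≥ 2/C₁` the bound `C₁ ≤ |a_g/b_g|` gives `|b_g| ≤ |a_g x|/2`, so `(a_g x + b_g)² ≥ a_g² x²/4`;
together with `x² + 1 ≤ 2x²` for `|x| ≥ 1` each term is at most `8/a_g²`, and the Weierstrass M-test
applies.
-/

lemma sq_div_four_le_sq_add {u v : ℝ} (h : |v| ≤ |u| / 2) : u ^ 2 / 4 ≤ (u + v) ^ 2 := by
  have hle : |u| / 2 ≤ |u + v| := by
    have := abs_sub_abs_le_abs_sub u (-v)
    rw [abs_neg, sub_neg_eq_add] at this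
    linarith
  calc u ^ 2 / 4 = (|u| / 2) ^ 2 := by rw [div_pow, sq_abs]; norm_num
    _ ≤ |u + v| ^ 2 := pow_le_pow_left₀ (by positivity) hle 2
    _ = (u + v) ^ 2 := sq_abs _

lemma abs_le_abs_mul_div_two {a b x C : ℝ} (hC : 0 < C) (hab : C * |b| ≤ |a|)
    (hx : 2 / C ≤ |x|) : |b| ≤ |a * x| / 2 := by
  have hCx : 2 ≤ C * |x| := by rwa [div_le_iff₀ hC, mul_comm] at hx
  rw [abs_mul]
  nlinarith [abs_nonneg b, abs_nonneg x]

lemma sq_add_one_div_le_eight_div_sq {a b e x : ℝ} (ha : a ≠ 0) (hx : 1 ≤ |x|)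
    (hb : |b| ≤ |a * x| / 2) : (x ^ 2 + 1) / ((a * x + b) ^ 2 + e ^ 2) ≤ 8 / a ^ 2 := by
  have hx2 : 1 ≤ x ^ 2 := by nlinarith [sq_abs x]
  have hkey : (a * x) ^ 2 / 4 ≤ (a * x + b) ^ 2 := sq_div_four_le_sq_add hb
  have ha2 : 0 < a ^ 2 := by positivity
  have hden : 0 < (a * x + b) ^ 2 + e ^ 2 := by nlinarith [sq_nonneg e]
  rw [div_le_div_iff₀ hden ha2]
  nlinarith [sq_nonneg e]

theorem stmt12_general {G : Type*} (a b c d : G → ℝ)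
    (ha : ∀ g, a g ≠ 0)
    (hsum : Summable fun g => 1 / (a g) ^ 2)
    (C₁ C₂ : ℝ) (hC₁ : 0 < C₁)
    (hbound : ∀ g, b g ≠ 0 → C₁ ≤ |a g / b g| ∧ |a g / b g| ≤ C₂) :
    TendstoUniformlyOn
      (fun (s : Finset G) (x : ℝ) =>
        ∑ g ∈ s, (x ^ 2 + 1) / ((a g * x + b g) ^ 2 + (c g * x + d g) ^ 2))
      (fun x : ℝ => ∑' g, (x ^ 2 + 1) / ((a g * x + b g) ^ 2 + (c g * x + d g) ^ 2))
      Filter.atTop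
      {x : ℝ | max (2 / C₁) 1 ≤ |x|} := by
  have hab : ∀ g, C₁ * |b g| ≤ |a g| := fun g => by
    by_cases hb : b g = 0
    · simp [hb]
    · have := (hbound g hb).1
      rwa [abs_div, le_div_iff₀ (abs_pos.mpr hb)] at this
  refine tendstoUniformlyOn_tsum (u := fun g => 8 / a g ^ 2) ?_ fun g x hx => ?_
  · simpa only [mul_one_div] using hsum.mul_left 8
  · obtain ⟨hxC, hx1⟩ := max_le_iff.mp (show max (2 / C₁) 1 ≤ |x| from hx)
    rw [Real.norm_of_nonneg (by positivity)]
    exact sq_add_one_div_le_eight_div_sq (ha g) hx1 (abs_le_abs_mul_div_two hC₁ (hab g) hxC)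

/-- Uniform convergence of the Poincaré-type series `Σ_g f(g;x)` on `{|x| ≥ max(2/C₁,1)}`,
given `Σ 1/a_g² < ∞` and uniform bounds `C₁ ≤ |a_g/b_g| ≤ C₂`. -/
theorem stmt12 {G : Type*} [Countable G] (a b c d : G → ℝ)
    (hdet : ∀ g, a g * d g - b g * c g = 1)
    (ha : ∀ g, a g ≠ 0)
    (hsum : Summable fun g => 1 / (a g) ^ 2)
    (C₁ C₂ : ℝ) (hC₁ : 0 < C₁) (hC₁₂ : C₁ ≤ C₂)
    (hbound : ∀ g, b g ≠ 0 → C₁ ≤ |a g / b g| ∧ |a g / b g| ≤ C₂) :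
    TendstoUniformlyOn
      (fun (s : Finset G) (x : ℝ) =>
        ∑ g ∈ s, (x ^ 2 + 1) / ((a g * x + b g) ^ 2 + (c g * x + d g) ^ 2))
      (fun x : ℝ => ∑' g, (x ^ 2 + 1) / ((a g * x + b g) ^ 2 + (c g * x + d g) ^ 2))
      Filter.atTop
      {x : ℝ | max (2 / C₁) 1 ≤ |x|} :=
  stmt12_general a b c d ha hsum C₁ C₂ hC₁ hbound
end
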